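/- arXiv:0801.2310 — 3 statements merged into one kernel-verified Lean document; each statement's English description precedes it below -/
import Mathlib

section
/- (Variant of the Hardy–Littlewood–Sobolev inequality) Let d ≥ 3 and m = 2(d−1)/d. There exists a finite constant C > 0 such that for every measurable h : ℝ^d → ℝ with h ≥ 0 a.e. and h ∈ L¹(ℝ^d) ∩ L^m(ℝ^d), one has 𝒲(h) = ∬_{ℝ^d×ℝ^d} h(x)h(y)|x−y|^(−(d−2)) dx dy ≤ C ‖h‖₁^(2/d) ‖h‖_m^m. In particular the supremum C_* of 𝒲(h)/(‖h‖₁^(2/d) ‖h‖_m^m) over all such nonzero h is finite. -/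
open MeasureTheory Real Metric Set

noncomputable section

abbrev E (d : ℕ) := EuclideanSpace ℝ (Fin d)

def mexp (d : ℕ) : ℝ := 2 * ((d : ℝ) - 1) / d

def sigmaD (d : ℕ) : ℝ := 2 * Real.pi ^ ((d : ℝ) / 2) / Real.Gamma ((d : ℝ) / 2)

def cD (d : ℕ) : ℝ := 1 / (((d : ℝ) - 2) * sigmaD d)

def Wfun (d : ℕ) (h : E d → ℝ) : ℝ :=
  ∫ x : E d, ∫ y : E d, h x * h y * ‖x - y‖ ^ (-((d : ℝ) - 2))

def nrm (d : ℕ) (p : ℝ) (h : E d → ℝ) : ℝ :=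
  (eLpNorm h (ENNReal.ofReal p) volume).toReal

def InL1Lm (d : ℕ) (h : E d → ℝ) : Prop :=
  MemLp h 1 volume ∧ MemLp h (ENNReal.ofReal (mexp d)) volume ∧ 0 ≤ᵐ[volume] h

def Ffun (d : ℕ) (h : E d → ℝ) : ℝ :=
  (1 / (mexp d - 1)) * (∫ x : E d, h x ^ mexp d) - (cD d / 2) * Wfun d h

def Cstar (d : ℕ) : ℝ :=
  sSup { r : ℝ | ∃ h : E d → ℝ, InL1Lm d h ∧ ¬ (h =ᵐ[volume] 0) ∧
    r = Wfun d h / (nrm d 1 h ^ (2 / (d : ℝ)) * nrm d (mexp d) h ^ mexp d) }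

def Mc (d : ℕ) : ℝ := (2 / ((mexp d - 1) * Cstar d * cD d)) ^ ((d : ℝ) / 2)

def YM (d : ℕ) (M : ℝ) : Set (E d → ℝ) := { h | InL1Lm d h ∧ nrm d 1 h = M }

def M2 (d : ℕ) (h : E d → ℝ) : ℝ := ∫ x : E d, ‖x‖ ^ 2 * h x

def Gfun (d : ℕ) (h : E d → ℝ) : ℝ := Ffun d h + M2 d h / 2

def ZM (d : ℕ) (M : ℝ) : Set (E d → ℝ) :=
  { h | h ∈ YM d M ∧ Integrable (fun x : E d => ‖x‖ ^ 2 * h x) volume }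

def lap (d : ℕ) (f : E d → ℝ) (x : E d) : ℝ :=
  ∑ i : Fin d, fderiv ℝ (fun y => fderiv ℝ f y (EuclideanSpace.single i 1)) x (EuclideanSpace.single i 1)

open scoped ENNReal NNReal

/-! Split the kernel `|z|^{-(d-2)}` at a radius `R`. Off the ball `B_R` it is at most
`R^{-(d-2)}`, which contributes `R^{-(d-2)} ‖h‖₁²`. On the ball its power `q = (d-1)/(d-2)` is
`|z|^{-(d-1)}`, whose integral over `B_R` is `d |B_1| R` in polar coordinates; as
`2/m + 1/q = 2`, Young's convolution inequality bounds this part by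
`‖h‖ₘ² (d |B_1| R)^{1/q}`. Balancing the two terms in `R` yields
`2 (d |B_1|)^{(d-2)/d} ‖h‖₁^{2/d} ‖h‖ₘ^m`. -/

theorem ENNReal.pairwise_mul_rpow_eq (X Y Z : ℝ≥0∞) {a b c : ℝ} (ha : 0 ≤ a) (hb : 0 ≤ b)
    (hc : 0 ≤ c) :
    (X * Z) ^ a * (Y * Z) ^ b * (X * Y) ^ c = X ^ (a + c) * Y ^ (b + c) * Z ^ (a + b) := by
  rw [ENNReal.mul_rpow_of_nonneg _ _ ha, ENNReal.mul_rpow_of_nonneg _ _ hb,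
    ENNReal.mul_rpow_of_nonneg _ _ hc, ENNReal.rpow_add_of_nonneg _ _ ha hc,
    ENNReal.rpow_add_of_nonneg _ _ hb hc, ENNReal.rpow_add_of_nonneg _ _ ha hb]
  ring

theorem lintegral_lintegral_mul_mul_sub_le_add {G : Type*} [MeasurableSpace G] [AddGroup G]
    [MeasurableSub₂ G] {μ : Measure G} {f K K₁ : G → ℝ≥0∞} {c : ℝ≥0∞} (hf : Measurable f)
    (hK : ∀ z, K z ≤ K₁ z + c) :
    ∫⁻ x, ∫⁻ y, f x * f y * K (x - y) ∂μ ∂μ ≤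
      ∫⁻ x, ∫⁻ y, f x * f y * K₁ (x - y) ∂μ ∂μ + c * (∫⁻ x, f x ∂μ) ^ 2 := by
  have hinner (x : G) : ∫⁻ y, f x * f y * K₁ (x - y) + c * f x * f y ∂μ =
      ∫⁻ y, f x * f y * K₁ (x - y) ∂μ + c * (∫⁻ y, f y ∂μ) * f x := by
    rw [lintegral_add_right _ (by fun_prop), lintegral_const_mul _ hf]
    ring
  calc ∫⁻ x, ∫⁻ y, f x * f y * K (x - y) ∂μ ∂μ
      ≤ ∫⁻ x, ∫⁻ y, f x * f y * K₁ (x - y) + c * f x * f y ∂μ ∂μ := by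
        gcongr with x y
        calc f x * f y * K (x - y) ≤ f x * f y * (K₁ (x - y) + c) := by grw [hK]
          _ = _ := by ring
    _ = _ := by
        rw [lintegral_congr hinner, lintegral_add_right _ (by fun_prop), lintegral_const_mul _ hf]
        ring

section Young

variable {G : Type*} [MeasurableSpace G] [AddCommGroup G] [MeasurableAdd₂ G] [MeasurableNeg G]
  {μ : Measure G} [SFinite μ] [μ.IsAddLeftInvariant]

theorem lintegral_prod_mul_sub_fst [μ.IsNegInvariant] {φ K : G → ℝ≥0∞} (hφ : Measurable φ)
    (hK : Measurable K) :
    ∫⁻ z, φ z.1 * K (z.1 - z.2) ∂μ.prod μ = (∫⁻ x, φ x ∂μ) * ∫⁻ z, K z ∂μ := by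
  rw [lintegral_prod _ (by fun_prop)]
  calc ∫⁻ x, ∫⁻ y, φ x * K (x - y) ∂μ ∂μ = ∫⁻ x, φ x * ∫⁻ z, K z ∂μ ∂μ :=
        lintegral_congr fun x => by
          rw [lintegral_const_mul _ (by fun_prop), lintegral_sub_left_eq_self K x]
    _ = _ := lintegral_mul_const _ hφ

theorem lintegral_prod_mul_sub_snd {φ K : G → ℝ≥0∞} (hφ : Measurable φ) (hK : Measurable K) :
    ∫⁻ z, φ z.2 * K (z.1 - z.2) ∂μ.prod μ = (∫⁻ y, φ y ∂μ) * ∫⁻ z, K z ∂μ := by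
  rw [lintegral_prod_symm _ (by fun_prop)]
  calc ∫⁻ y, ∫⁻ x, φ y * K (x - y) ∂μ ∂μ = ∫⁻ y, φ y * ∫⁻ z, K z ∂μ ∂μ :=
        lintegral_congr fun y => by
          rw [lintegral_const_mul _ (by fun_prop), lintegral_sub_right_eq_self K y]
    _ = _ := lintegral_mul_const _ hφ

-- Young's convolution inequality in trilinear form.
theorem lintegral_lintegral_mul_mul_sub_le [μ.IsNegInvariant] {f g K : G → ℝ≥0∞}
    (hf : Measurable f) (hg : Measurable g) (hK : Measurable K) {p r q : ℝ} (hp : 1 ≤ p)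
    (hr : 1 ≤ r) (hq : 1 ≤ q) (hprq : p⁻¹ + r⁻¹ + q⁻¹ = 2) :
    ∫⁻ x, ∫⁻ y, f x * g y * K (x - y) ∂μ ∂μ ≤
      (∫⁻ x, f x ^ p ∂μ) ^ p⁻¹ * (∫⁻ y, g y ^ r ∂μ) ^ r⁻¹ * (∫⁻ z, K z ^ q ∂μ) ^ q⁻¹ := by
  have hw {s : ℝ} (hs : 1 ≤ s) : 0 ≤ 1 - s⁻¹ := sub_nonneg.mpr (inv_le_one_of_one_le₀ hs)
  have hwp : (1 - r⁻¹) + (1 - q⁻¹) = p⁻¹ := by linarith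
  have hwr : (1 - p⁻¹) + (1 - q⁻¹) = r⁻¹ := by linarith
  have hwq : (1 - r⁻¹) + (1 - p⁻¹) = q⁻¹ := by linarith
  set w : Fin 3 → ℝ := ![1 - r⁻¹, 1 - p⁻¹, 1 - q⁻¹]
  set F : Fin 3 → G × G → ℝ≥0∞ :=
    ![fun z => f z.1 ^ p * K (z.1 - z.2) ^ q, fun z => g z.2 ^ r * K (z.1 - z.2) ^ q,
      fun z => f z.1 ^ p * g z.2 ^ r]
  have holder : ∫⁻ z, ∏ i, F i z ^ w i ∂μ.prod μ ≤ ∏ i, (∫⁻ z, F i z ∂μ.prod μ) ^ w i :=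
    ENNReal.lintegral_prod_norm_pow_le _ (fun i _ => by fin_cases i <;> simp [F] <;> fun_prop)
      (by simp [w, Fin.sum_univ_three]; linarith)
      (fun i _ => by fin_cases i <;> simp [w, hw, hp, hr, hq])
  have hpt (z : G × G) : f z.1 * g z.2 * K (z.1 - z.2) = ∏ i, F i z ^ w i := by
    rw [Fin.prod_univ_three]
    change _ = (f z.1 ^ p * K (z.1 - z.2) ^ q) ^ (1 - r⁻¹) *
      (g z.2 ^ r * K (z.1 - z.2) ^ q) ^ (1 - p⁻¹) * (f z.1 ^ p * g z.2 ^ r) ^ (1 - q⁻¹)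
    rw [ENNReal.pairwise_mul_rpow_eq _ _ _ (hw hr) (hw hp) (hw hq), hwp, hwr, hwq,
      ENNReal.rpow_rpow_inv (by linarith), ENNReal.rpow_rpow_inv (by linarith),
      ENNReal.rpow_rpow_inv (by linarith)]
  calc ∫⁻ x, ∫⁻ y, f x * g y * K (x - y) ∂μ ∂μ
      = ∫⁻ z, f z.1 * g z.2 * K (z.1 - z.2) ∂μ.prod μ :=
        (lintegral_prod (fun z : G × G => f z.1 * g z.2 * K (z.1 - z.2)) (by fun_prop)).symm
    _ ≤ ∏ i, (∫⁻ z, F i z ∂μ.prod μ) ^ w i := by simp_rw [hpt]; exact holder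
    _ = _ := by
      rw [Fin.prod_univ_three]
      change (∫⁻ z, f z.1 ^ p * K (z.1 - z.2) ^ q ∂μ.prod μ) ^ (1 - r⁻¹) *
        (∫⁻ z, g z.2 ^ r * K (z.1 - z.2) ^ q ∂μ.prod μ) ^ (1 - p⁻¹) *
        (∫⁻ z, f z.1 ^ p * g z.2 ^ r ∂μ.prod μ) ^ (1 - q⁻¹) = _
      rw [lintegral_prod_mul_sub_fst (φ := fun x => f x ^ p) (K := fun z => K z ^ q)
          (by fun_prop) (by fun_prop),
        lintegral_prod_mul_sub_snd (φ := fun y => g y ^ r) (K := fun z => K z ^ q)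
          (by fun_prop) (by fun_prop),
        lintegral_prod_mul (f := fun x => f x ^ p) (g := fun y => g y ^ r) (by fun_prop)
          (by fun_prop),
        ENNReal.pairwise_mul_rpow_eq _ _ _ (hw hr) (hw hp) (hw hq), hwp, hwr, hwq]

end Young

theorem Real.exists_mul_rpow_add_mul_rpow_neg_eq {x y s t : ℝ} (hx : 0 < x) (hy : 0 < y)
    (hs : 0 < s) (ht : 0 < t) :
    ∃ R > 0, x * R ^ s + y * R ^ (-t) = 2 * (x ^ (t / (s + t)) * y ^ (s / (s + t))) := by
  -- the radius at which `x * R ^ s = y * R ^ (-t)`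
  refine ⟨exp ((log y - log x) / (s + t)), exp_pos _, ?_⟩
  simp only [Real.rpow_def_of_pos (exp_pos _), Real.rpow_def_of_pos hx, Real.rpow_def_of_pos hy,
    log_exp]
  rw [← exp_log hx, ← exp_log hy, log_exp, log_exp]
  simp only [← exp_add]
  have hst : s + t ≠ 0 := by positivity
  have e₁ : log x + (log y - log x) / (s + t) * s =
      log x * (t / (s + t)) + log y * (s / (s + t)) := by
    field_simp; ring
  have e₂ : log y + (log y - log x) / (s + t) * -t =
      log x * (t / (s + t)) + log y * (s / (s + t)) := by
    field_simp; ring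
  rw [e₁, e₂]; ring

theorem exists_radius_balancing {n : ℕ} (h3 : 3 ≤ n) {p σ a : ℝ} (hp : 0 < p) (hσ : 0 < σ)
    (ha : 0 < a) :
    ∃ R > 0, p ^ (2 / mexp n) * (σ * R) ^ (((n : ℝ) - 2) / (n - 1)) + a ^ 2 * R ^ (-((n : ℝ) - 2)) =
      2 * σ ^ (((n : ℝ) - 2) / n) * a ^ (2 / (n : ℝ)) * p := by
  have hn3 : (3 : ℝ) ≤ n := by exact_mod_cast h3
  have hn0 : (n : ℝ) ≠ 0 := by positivity
  have hn1 : (n : ℝ) - 1 ≠ 0 := by linarith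
  have hn2 : (n : ℝ) - 2 ≠ 0 := by linarith
  obtain ⟨R, hR, hbal⟩ := Real.exists_mul_rpow_add_mul_rpow_neg_eq
    (x := p ^ (2 / mexp n) * σ ^ (((n : ℝ) - 2) / (n - 1))) (y := a ^ 2)
    (s := ((n : ℝ) - 2) / (n - 1)) (by positivity) (by positivity)
    (div_pos (by linarith) (by linarith)) (by linarith : 0 < (n : ℝ) - 2)
  refine ⟨R, hR, ?_⟩
  rw [Real.mul_rpow hσ.le hR.le, ← mul_assoc, hbal, Real.mul_rpow (by positivity) (by positivity),
    ← Real.rpow_mul hp.le, ← Real.rpow_mul hσ.le, ← Real.rpow_natCast, ← Real.rpow_mul ha.le]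
  have hsum : ((n : ℝ) - 2) / (n - 1) + (n - 2) = (n - 2) * n / (n - 1) := by
    field_simp; ring
  have e₁ : 2 / mexp n * ((n - 2) / ((n - 2) * n / (n - 1))) = (1 : ℝ) := by
    rw [mexp]; field_simp
  have e₂ : ((n : ℝ) - 2) / (n - 1) * ((n - 2) / ((n - 2) * n / (n - 1))) = (n - 2) / n := by
    field_simp
  have e₃ : ((2 : ℕ) : ℝ) * ((n - 2) / (n - 1) / ((n - 2) * n / (n - 1))) = 2 / n := by
    field_simp; ring
  rw [hsum, e₁, e₂, e₃, Real.rpow_one]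
  ring

section Polar

variable {V : Type*} [NormedAddCommGroup V] [NormedSpace ℝ V] [FiniteDimensional ℝ V]
  [MeasurableSpace V] [BorelSpace V] [Nontrivial V] (μ : Measure V) [μ.IsAddHaarMeasure]

theorem integral_ball_norm_rpow_neg {s R : ℝ} (hs : s < Module.finrank ℝ V) (hR : 0 ≤ R) :
    ∫ z in ball (0 : V) R, ‖z‖ ^ (-s) ∂μ =
      Module.finrank ℝ V * μ.real (ball 0 1) * R ^ (Module.finrank ℝ V - s) /
        (Module.finrank ℝ V - s) := by
  set n := Module.finrank ℝ V
  have hn : 1 ≤ n := Module.finrank_pos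
  have hind (z : V) : (ball (0 : V) R).indicator (fun z => ‖z‖ ^ (-s)) z =
      (Iio R).indicator (fun y : ℝ => y ^ (-s)) ‖z‖ := by
    by_cases hz : ‖z‖ < R <;> simp [indicator, hz]
  have hrad : ∫ y in Ioi (0 : ℝ), y ^ (n - 1) • (Iio R).indicator (fun y : ℝ => y ^ (-s)) y =
      ∫ y in (0)..R, y ^ ((n : ℝ) - 1 - s) := by
    rw [intervalIntegral.integral_of_le hR, integral_Ioc_eq_integral_Ioo, ← Ioi_inter_Iio,
      ← setIntegral_indicator measurableSet_Iio]
    refine setIntegral_congr_fun measurableSet_Ioi fun y (hy : 0 < y) => ?_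
    by_cases hyR : y < R
    · rw [indicator_of_mem (show y ∈ Iio R from hyR), indicator_of_mem (show y ∈ Iio R from hyR),
        smul_eq_mul, ← Real.rpow_natCast, Nat.cast_sub hn, Nat.cast_one, ← Real.rpow_add hy]
      ring_nf
    · simp [indicator_of_notMem (show y ∉ Iio R from hyR)]
  rw [← integral_indicator measurableSet_ball, funext hind, integral_fun_norm_addHaar, hrad,
    integral_rpow (by left; linarith), Real.zero_rpow (by linarith), nsmul_eq_mul, smul_eq_mul,
    show (n : ℝ) - 1 - s + 1 = n - s by ring]
  ring

theorem lintegral_indicator_ball_norm_rpow_neg_rpow {t q R : ℝ} (hq : 0 < q)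
    (htq : t * q < Module.finrank ℝ V) (hR : 0 ≤ R) :
    ∫⁻ z, (ball (0 : V) R).indicator (fun z => ENNReal.ofReal (‖z‖ ^ (-t))) z ^ q ∂μ =
      ENNReal.ofReal (Module.finrank ℝ V * μ.real (ball 0 1) *
        R ^ (Module.finrank ℝ V - t * q) / (Module.finrank ℝ V - t * q)) := by
  have hpt (z : V) : (ball (0 : V) R).indicator (fun z => ENNReal.ofReal (‖z‖ ^ (-t))) z ^ q =
      (ball (0 : V) R).indicator (fun z => ENNReal.ofReal (‖z‖ ^ (-(t * q)))) z := by
    by_cases hz : z ∈ ball (0 : V) R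
    · rw [indicator_of_mem hz, indicator_of_mem hz,
        ENNReal.ofReal_rpow_of_nonneg (by positivity) hq.le, ← Real.rpow_mul (norm_nonneg z),
        neg_mul]
    · rw [indicator_of_notMem hz, indicator_of_notMem hz, ENNReal.zero_rpow_of_pos hq]
  have hint : IntegrableOn (fun z : V => ‖z‖ ^ (-(t * q))) (ball 0 R) μ :=
    integrableOn_ball_of_norm_le_rpow Module.finrank_pos htq (C := 1)
      (ae_of_all _ fun z => by rw [one_mul, Real.norm_of_nonneg (by positivity)])
      (measurable_norm.pow_const _).aestronglyMeasurable
  rw [lintegral_congr hpt, lintegral_indicator measurableSet_ball,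
    ← integral_ball_norm_rpow_neg μ htq hR,
    ofReal_integral_eq_lintegral_ofReal hint (ae_of_all _ fun z => by positivity)]

end Polar

theorem ofReal_norm_rpow_neg_le_indicator_ball_add {V : Type*} [SeminormedAddCommGroup V]
    {t R : ℝ} (ht : 0 ≤ t) (hR : 0 < R) (z : V) :
    ENNReal.ofReal (‖z‖ ^ (-t)) ≤ (ball (0 : V) R).indicator
      (fun z => ENNReal.ofReal (‖z‖ ^ (-t))) z + ENNReal.ofReal (R ^ (-t)) := by
  by_cases hz : z ∈ ball (0 : V) R
  · rw [indicator_of_mem hz]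
    exact le_self_add
  · rw [indicator_of_notMem hz, zero_add]
    exact ENNReal.ofReal_le_ofReal <|
      Real.rpow_le_rpow_of_nonpos hR (by simpa using hz) (neg_nonpos.mpr ht)

section Riesz

variable {V : Type*} [NormedAddCommGroup V] [NormedSpace ℝ V] [FiniteDimensional ℝ V]
  [MeasurableSpace V] [BorelSpace V] {μ : Measure V} [μ.IsAddHaarMeasure]

-- The kernel `ENNReal.ofReal (‖z‖ ^ (-t))` vanishes at `z = 0`, like the integrand of `Wfun`.
theorem lintegral_lintegral_riesz_le_add {n : ℕ} (hn : Module.finrank ℝ V = n) (h3 : 3 ≤ n)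
    {f : V → ℝ≥0∞} (hf : Measurable f) {R : ℝ} (hR : 0 < R) :
    ∫⁻ x, ∫⁻ y, f x * f y * ENNReal.ofReal (‖x - y‖ ^ (-((n : ℝ) - 2))) ∂μ ∂μ ≤
      (∫⁻ x, f x ^ mexp n ∂μ) ^ (2 / mexp n) *
          ENNReal.ofReal ((n * μ.real (ball 0 1) * R) ^ (((n : ℝ) - 2) / (n - 1))) +
        ENNReal.ofReal (R ^ (-((n : ℝ) - 2))) * (∫⁻ x, f x ∂μ) ^ 2 := by
  have : Nontrivial V := Module.nontrivial_of_finrank_pos (R := ℝ) (by omega)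
  have hn3 : (3 : ℝ) ≤ n := by exact_mod_cast h3
  have hn1 : (n : ℝ) - 1 ≠ 0 := by linarith
  have hn2 : (n : ℝ) - 2 ≠ 0 := by linarith
  set t : ℝ := (n : ℝ) - 2
  set q : ℝ := (n - 1) / t
  set K : V → ℝ≥0∞ := fun z => ENNReal.ofReal (‖z‖ ^ (-t))
  set K₁ := (ball (0 : V) R).indicator K
  have htq : t * q = n - 1 := by simp only [q]; field_simp
  have hm : 1 ≤ mexp n := by rw [mexp, le_div_iff₀ (by linarith)]; linarith
  have hq : 1 ≤ q := by rw [le_div_iff₀ (by linarith)]; linarith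
  have hmq : (mexp n)⁻¹ + (mexp n)⁻¹ + q⁻¹ = 2 := by simp only [mexp, q, t]; field_simp; ring
  have hK₁q : ∫⁻ z, K₁ z ^ q ∂μ = ENNReal.ofReal (n * μ.real (ball 0 1) * R) := by
    rw [lintegral_indicator_ball_norm_rpow_neg_rpow μ (by positivity) (by rw [hn]; linarith) hR.le,
      hn, htq]
    norm_num
  have hK₁ : Measurable K₁ := (by fun_prop : Measurable K).indicator measurableSet_ball
  calc ∫⁻ x, ∫⁻ y, f x * f y * K (x - y) ∂μ ∂μ
      ≤ ∫⁻ x, ∫⁻ y, f x * f y * K₁ (x - y) ∂μ ∂μ +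
          ENNReal.ofReal (R ^ (-t)) * (∫⁻ x, f x ∂μ) ^ 2 :=
        lintegral_lintegral_mul_mul_sub_le_add hf
          (ofReal_norm_rpow_neg_le_indicator_ball_add (by linarith) hR)
    _ ≤ (∫⁻ x, f x ^ mexp n ∂μ) ^ (mexp n)⁻¹ * (∫⁻ x, f x ^ mexp n ∂μ) ^ (mexp n)⁻¹ *
          (∫⁻ z, K₁ z ^ q ∂μ) ^ q⁻¹ + ENNReal.ofReal (R ^ (-t)) * (∫⁻ x, f x ∂μ) ^ 2 := by
        grw [lintegral_lintegral_mul_mul_sub_le hf hf hK₁ hm hm hq hmq]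
    _ = _ := by
        rw [hK₁q, ← ENNReal.rpow_add_of_nonneg _ _ (by positivity) (by positivity),
          ENNReal.ofReal_rpow_of_nonneg (by positivity) (by positivity), ← two_mul,
          ← div_eq_mul_inv, show q⁻¹ = t / (n - 1) by simp only [q, inv_div]]

theorem lintegral_lintegral_riesz_le {n : ℕ} (hn : Module.finrank ℝ V = n) (h3 : 3 ≤ n)
    {f : V → ℝ≥0∞} (hf : Measurable f) (hA : ∫⁻ x, f x ∂μ ≠ ∞)
    (hP : ∫⁻ x, f x ^ mexp n ∂μ ≠ ∞) :
    ∫⁻ x, ∫⁻ y, f x * f y * ENNReal.ofReal (‖x - y‖ ^ (-((n : ℝ) - 2))) ∂μ ∂μ ≤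
      ENNReal.ofReal (2 * (n * μ.real (ball 0 1)) ^ (((n : ℝ) - 2) / n) *
        (∫⁻ x, f x ∂μ).toReal ^ (2 / (n : ℝ)) * (∫⁻ x, f x ^ mexp n ∂μ).toReal) := by
  by_cases h0 : f =ᵐ[μ] 0
  · refine le_of_eq_of_le ?_ zero_le
    rw [← lintegral_zero (μ := μ)]
    exact lintegral_congr_ae (h0.mono fun x hx => by simp [hx])
  have hn3 : (3 : ℝ) ≤ n := by exact_mod_cast h3
  have hm : 0 < mexp n := by rw [mexp]; exact div_pos (by linarith) (by positivity)
  have hA0 : ∫⁻ x, f x ∂μ ≠ 0 := fun h => h0 ((lintegral_eq_zero_iff hf).mp h)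
  have hP0 : ∫⁻ x, f x ^ mexp n ∂μ ≠ 0 := fun h => h0 <|
    ((lintegral_eq_zero_iff (hf.pow_const _)).mp h).mono fun x hx => by
      simpa [hm, hm.not_gt] using hx
  set a := (∫⁻ x, f x ∂μ).toReal
  set p := (∫⁻ x, f x ^ mexp n ∂μ).toReal
  set σ := n * μ.real (ball (0 : V) 1)
  have hσ : 0 < σ := by
    have : Nontrivial V := Module.nontrivial_of_finrank_pos (R := ℝ) (by omega)
    exact mul_pos (by positivity)
      (ENNReal.toReal_pos (measure_ball_pos μ 0 one_pos).ne' measure_ball_lt_top.ne)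
  obtain ⟨R, hR, hbal⟩ := exists_radius_balancing h3 (ENNReal.toReal_pos hP0 hP) hσ
    (ENNReal.toReal_pos hA0 hA)
  calc ∫⁻ x, ∫⁻ y, f x * f y * ENNReal.ofReal (‖x - y‖ ^ (-((n : ℝ) - 2))) ∂μ ∂μ
      ≤ _ := lintegral_lintegral_riesz_le_add hn h3 hf hR
    _ = ENNReal.ofReal (p ^ (2 / mexp n) * (σ * R) ^ (((n : ℝ) - 2) / (n - 1)) +
          a ^ 2 * R ^ (-((n : ℝ) - 2))) := by
      rw [ENNReal.ofReal_add (by positivity) (by positivity), ENNReal.ofReal_mul (by positivity),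
        ENNReal.ofReal_mul (by positivity), ENNReal.ofReal_pow ENNReal.toReal_nonneg,
        ENNReal.ofReal_toReal hA, ← ENNReal.ofReal_rpow_of_nonneg ENNReal.toReal_nonneg
          (by positivity), ENNReal.ofReal_toReal hP]
      ring
    _ = _ := by rw [hbal]

end Riesz

section LebesgueBochner

variable {α : Type*} [MeasurableSpace α] {μ : Measure α}

theorem ENNReal.ofReal_integral_le_lintegral_ofReal {f : α → ℝ} (hf : 0 ≤ᵐ[μ] f) :
    ENNReal.ofReal (∫ x, f x ∂μ) ≤ ∫⁻ x, ENNReal.ofReal (f x) ∂μ := by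
  calc ENNReal.ofReal (∫ x, f x ∂μ) ≤ ‖∫ x, f x ∂μ‖ₑ := Real.ofReal_le_enorm _
    _ ≤ ∫⁻ x, ‖f x‖ₑ ∂μ := enorm_integral_le_lintegral_enorm f
    _ = ∫⁻ x, ENNReal.ofReal (f x) ∂μ :=
      lintegral_congr_ae (hf.mono fun x hx => Real.enorm_of_nonneg hx)

theorem ENNReal.ofReal_integral_integral_le {β : Type*} [MeasurableSpace β] {ν : Measure β}
    {F : α → β → ℝ} (hF : ∀ x y, 0 ≤ F x y) :
    ENNReal.ofReal (∫ x, ∫ y, F x y ∂ν ∂μ) ≤ ∫⁻ x, ∫⁻ y, ENNReal.ofReal (F x y) ∂ν ∂μ :=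
  (ENNReal.ofReal_integral_le_lintegral_ofReal (ae_of_all _ fun x => integral_nonneg (hF x))).trans
    (lintegral_mono fun x => ENNReal.ofReal_integral_le_lintegral_ofReal (ae_of_all _ (hF x)))

theorem eLpNorm_one_eq_lintegral_ofReal {f : α → ℝ} (hf : 0 ≤ᵐ[μ] f) :
    eLpNorm f 1 μ = ∫⁻ x, ENNReal.ofReal (f x) ∂μ := by
  rw [eLpNorm_one_eq_lintegral_enorm]
  exact lintegral_congr_ae (hf.mono fun x hx => Real.enorm_of_nonneg hx)

theorem eLpNorm_ofReal_rpow_eq_lintegral_ofReal_rpow {f : α → ℝ} (hf : 0 ≤ᵐ[μ] f) {p : ℝ}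
    (hp : 0 < p) : eLpNorm f (ENNReal.ofReal p) μ ^ p = ∫⁻ x, ENNReal.ofReal (f x) ^ p ∂μ := by
  have h := eLpNorm_nnreal_pow_eq_lintegral (μ := μ) (f := f) (p := p.toNNReal) (by simpa using hp)
  rw [Real.coe_toNNReal _ hp.le] at h
  rw [ENNReal.ofReal, h]
  exact lintegral_congr_ae (hf.mono fun x hx => by simp only [Real.enorm_of_nonneg hx])

end LebesgueBochner

theorem Wfun_congr_ae {d : ℕ} {h h' : E d → ℝ} (hh : h =ᵐ[volume] h') : Wfun d h = Wfun d h' :=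
  integral_congr_ae <| hh.mono fun x hx => integral_congr_ae <| hh.mono fun y hy => by
    simp only [hx, hy]

theorem ofReal_Wfun_le {d : ℕ} {h : E d → ℝ} (hh : 0 ≤ h) :
    ENNReal.ofReal (Wfun d h) ≤ ∫⁻ x, ∫⁻ y, ENNReal.ofReal (h x) * ENNReal.ofReal (h y) *
      ENNReal.ofReal (‖x - y‖ ^ (-((d : ℝ) - 2))) := by
  refine (ENNReal.ofReal_integral_integral_le fun x y => ?_).trans_eq ?_
  · exact mul_nonneg (mul_nonneg (hh x) (hh y)) (Real.rpow_nonneg (norm_nonneg _) _)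
  · simp only [ENNReal.ofReal_mul (hh _), ENNReal.ofReal_mul (mul_nonneg (hh _) (hh _))]

theorem Wfun_le {d : ℕ} (hd : 3 ≤ d) {h : E d → ℝ} (hh : InL1Lm d h) :
    Wfun d h ≤ 2 * (d * volume.real (ball (0 : E d) 1)) ^ (((d : ℝ) - 2) / d) *
      nrm d 1 h ^ (2 / (d : ℝ)) * nrm d (mexp d) h ^ mexp d := by
  obtain ⟨h1, hm, hpos⟩ := hh
  obtain ⟨h₀, h₀_meas, h₀_nonneg, hae⟩ :=
    h1.aestronglyMeasurable.aemeasurable.exists_measurable_nonneg hpos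
  have hd' : (3 : ℝ) ≤ d := by exact_mod_cast hd
  have hmexp : 0 < mexp d := by rw [mexp]; exact div_pos (by linarith) (by positivity)
  have hA := eLpNorm_one_eq_lintegral_ofReal (μ := volume) (ae_of_all _ h₀_nonneg)
  have hP := eLpNorm_ofReal_rpow_eq_lintegral_ofReal_rpow (μ := volume) (ae_of_all _ h₀_nonneg)
    hmexp
  rw [Wfun_congr_ae hae, nrm, nrm, eLpNorm_congr_ae hae, eLpNorm_congr_ae hae, ENNReal.ofReal_one,
    hA, ENNReal.toReal_rpow (eLpNorm h₀ _ _), hP]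
  refine (ENNReal.ofReal_le_ofReal_iff (by positivity)).mp ((ofReal_Wfun_le h₀_nonneg).trans ?_)
  refine lintegral_lintegral_riesz_le finrank_euclideanSpace_fin hd
    (ENNReal.measurable_ofReal.comp h₀_meas) ?_ ?_
  · rw [← hA, ← eLpNorm_congr_ae hae]
    exact h1.2.ne
  · rw [← hP, ← eLpNorm_congr_ae hae]
    exact (ENNReal.rpow_lt_top_of_nonneg hmexp.le hm.2.ne).ne

/-- Variant of the Hardy–Littlewood–Sobolev inequality:
`𝒲(h) ≤ C ‖h‖₁^(2/d) ‖h‖ₘ^m` for all nonnegative `h ∈ L¹ ∩ Lᵐ`; in particular the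
supremum of the corresponding ratios is finite. -/
theorem vhls_inequality (d : ℕ) (hd : 3 ≤ d) :
    ∃ C : ℝ, 0 < C ∧
      (∀ h : E d → ℝ, InL1Lm d h →
        Wfun d h ≤ C * nrm d 1 h ^ (2 / (d : ℝ)) * nrm d (mexp d) h ^ mexp d) ∧
      BddAbove { r : ℝ | ∃ h : E d → ℝ, InL1Lm d h ∧ ¬ (h =ᵐ[volume] 0) ∧
        r = Wfun d h / (nrm d 1 h ^ (2 / (d : ℝ)) * nrm d (mexp d) h ^ mexp d) } := by
  set C := 2 * (d * volume.real (ball (0 : E d) 1)) ^ (((d : ℝ) - 2) / d)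
  have hC : 0 < C := by
    have : 0 < volume.real (ball (0 : E d) 1) :=
      ENNReal.toReal_pos (measure_ball_pos _ _ one_pos).ne' measure_ball_lt_top.ne
    have : (0 : ℝ) < d := by exact_mod_cast (by omega : 0 < d)
    positivity
  refine ⟨C, hC, fun h hh => Wfun_le hd hh, C, ?_⟩
  rintro r ⟨h, hh, -, rfl⟩
  refine div_le_of_le_mul₀ (by unfold nrm; positivity) hC.le ?_
  rw [← mul_assoc]
  exact Wfun_le hd hh
end
end

section
/- For every M with 0 < M ≤ M_c, the infimum of the free energy over 𝒴_M is zero: μ_M = inf{ ℱ[h] : h ∈ 𝒴_M } = 0. -/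
open MeasureTheory Real Metric Set

noncomputable section

open Filter Topology

/-! The lower bound is the defining inequality of `C_*`, `𝒲(h) ≤ C_* M^{2/d} ‖h‖_m^m` on `𝒴_M`,
which for `M ≤ M_c` makes the attractive term at most the diffusive one. The bound is sharp:
spreading the mass `M` uniformly over the ball `B_R` gives a nonnegative interaction energy and
`∫ h^m = M^m |B_R|^{1-m} → 0` as `R → ∞`, since `m > 1`. -/

theorem integral_rpow_eq_toReal_eLpNorm_rpow {α : Type*} [MeasurableSpace α] {μ : Measure α}
    {f : α → ℝ} {p : ℝ} (hp : 0 < p) (hf : MemLp f (ENNReal.ofReal p) μ) (hf0 : 0 ≤ᵐ[μ] f) :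
    ∫ x, f x ^ p ∂μ = (eLpNorm f (ENNReal.ofReal p) μ).toReal ^ p := by
  have hp0 : ENNReal.ofReal p ≠ 0 := by simpa using hp
  have hnorm : ∫ x, ‖f x‖ ^ p ∂μ = ∫ x, f x ^ p ∂μ :=
    integral_congr_ae (hf0.mono fun x hx => by simp only [Real.norm_of_nonneg hx])
  rw [hf.eLpNorm_eq_integral_rpow_norm hp0 ENNReal.ofReal_ne_top, ENNReal.toReal_ofReal_eq_iff.mpr
    (by positivity), ENNReal.toReal_ofReal hp.le, ← Real.rpow_mul (by positivity),
    inv_mul_cancel₀ hp.ne', Real.rpow_one, hnorm]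

theorem toReal_eLpNorm_pos {α : Type*} [MeasurableSpace α] {μ : Measure α}
    {f : α → ℝ} {p : ℝ} (hp : 0 < p) (hf : MemLp f (ENNReal.ofReal p) μ) (hf0 : ¬ f =ᵐ[μ] 0) :
    0 < (eLpNorm f (ENNReal.ofReal p) μ).toReal :=
  ENNReal.toReal_pos ((eLpNorm_eq_zero_iff hf.1 (by simpa using hp)).not.mpr hf0) hf.eLpNorm_ne_top

theorem measureReal_ball_pos {d : ℕ} {R : ℝ} (hR : 0 < R) : 0 < volume.real (ball (0 : E d) R) :=
  ENNReal.toReal_pos (measure_ball_pos volume _ hR).ne' measure_ball_lt_top.ne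

theorem tendsto_measureReal_ball_atTop {d : ℕ} (hd : d ≠ 0) :
    Tendsto (fun R : ℝ => volume.real (ball (0 : E d) R)) atTop atTop := by
  have : Nontrivial (E d) :=
    Module.nontrivial_of_finrank_pos (R := ℝ) (by rw [finrank_euclideanSpace_fin]; omega)
  have hball : ∀ᶠ R : ℝ in atTop,
      R ^ d * volume.real (ball (0 : E d) 1) = volume.real (ball (0 : E d) R) := by
    filter_upwards [eventually_ge_atTop 0] with R hR
    rw [measureReal_def, measureReal_def, Measure.addHaar_ball _ _ hR, finrank_euclideanSpace_fin,
      ENNReal.toReal_mul, ENNReal.toReal_ofReal (by positivity)]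
  exact (tendsto_pow_atTop hd).atTop_mul_const (measureReal_ball_pos one_pos) |>.congr' hball

section

variable {d : ℕ}

theorem one_lt_mexp (hd : 3 ≤ d) : 1 < mexp d := by
  have hd3 : (3 : ℝ) ≤ d := by exact_mod_cast hd
  rw [mexp, lt_div_iff₀ (by linarith)]
  linarith

theorem cD_pos (hd : 3 ≤ d) : 0 < cD d := by
  have hd3 : (3 : ℝ) ≤ d := by exact_mod_cast hd
  have hσ : 0 < sigmaD d :=
    div_pos (by positivity) (Real.Gamma_pos_of_pos (by positivity))
  exact div_pos one_pos (mul_pos (by linarith) hσ)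

theorem Wfun_nonneg {h : E d → ℝ} (hh : 0 ≤ h) : 0 ≤ Wfun d h :=
  integral_nonneg fun x => integral_nonneg fun y =>
    mul_nonneg (mul_nonneg (hh x) (hh y)) (Real.rpow_nonneg (norm_nonneg _) _)

def cstarRatios (d : ℕ) : Set ℝ :=
  { r : ℝ | ∃ h : E d → ℝ, InL1Lm d h ∧ ¬ (h =ᵐ[volume] 0) ∧
    r = Wfun d h / (nrm d 1 h ^ (2 / (d : ℝ)) * nrm d (mexp d) h ^ mexp d) }

theorem Cstar_eq_sSup : Cstar d = sSup (cstarRatios d) := rfl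

/-- Unbounded ratios would make `Cstar d` the junk value `sSup = 0`, and then `Mc d = 0`. -/
theorem bddAbove_cstarRatios (hd : d ≠ 0) (hMc : 0 < Mc d) : BddAbove (cstarRatios d) := by
  by_contra hB
  rw [Mc, Cstar_eq_sSup, Real.sSup_of_not_bddAbove hB, mul_zero, zero_mul, div_zero,
    Real.zero_rpow (by positivity)] at hMc
  exact lt_irrefl 0 hMc

theorem Wfun_le_Cstar_mul (hB : BddAbove (cstarRatios d)) {h : E d → ℝ} (hh : InL1Lm d h)
    (hh0 : ¬ h =ᵐ[volume] 0) (hm : 0 < mexp d) :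
    Wfun d h ≤ Cstar d * (nrm d 1 h ^ (2 / (d : ℝ)) * nrm d (mexp d) h ^ mexp d) := by
  have h1 : 0 < nrm d 1 h := toReal_eLpNorm_pos one_pos (by simpa using hh.1) hh0
  have h2 : 0 < nrm d (mexp d) h := toReal_eLpNorm_pos hm hh.2.1 hh0
  rw [← div_le_iff₀ (by positivity)]
  exact le_csSup hB ⟨h, hh, hh0, rfl⟩

theorem cD_mul_Cstar_mul_rpow_le (hd : 3 ≤ d) {M : ℝ} (hM : 0 < M) (hMc : M ≤ Mc d) :
    cD d / 2 * Cstar d * M ^ (2 / (d : ℝ)) ≤ 1 / (mexp d - 1) := by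
  have hm : 0 < mexp d - 1 := sub_pos.mpr (one_lt_mexp hd)
  have hc := cD_pos hd
  have hd0 : (0 : ℝ) < d := by positivity
  rcases le_or_gt (Cstar d) 0 with hC | hC
  · have : cD d / 2 * Cstar d * M ^ (2 / (d : ℝ)) ≤ 0 :=
      mul_nonpos_of_nonpos_of_nonneg (mul_nonpos_of_nonneg_of_nonpos (by positivity) hC)
        (by positivity)
    exact this.trans (by positivity)
  · set b := 2 / ((mexp d - 1) * Cstar d * cD d) with hb
    have hMb : M ^ (2 / (d : ℝ)) ≤ b := by
      calc M ^ (2 / (d : ℝ)) ≤ (b ^ ((d : ℝ) / 2)) ^ (2 / (d : ℝ)) :=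
            Real.rpow_le_rpow hM.le hMc (by positivity)
        _ = b := by
          rw [← Real.rpow_mul (by positivity), show (d : ℝ) / 2 * (2 / d) = 1 by field_simp,
            Real.rpow_one]
    calc cD d / 2 * Cstar d * M ^ (2 / (d : ℝ)) ≤ cD d / 2 * Cstar d * b := by gcongr
      _ = 1 / (mexp d - 1) := by rw [hb]; field_simp

theorem Ffun_nonneg (hd : 3 ≤ d) {M : ℝ} (hM : 0 < M) (hMc : M ≤ Mc d) {h : E d → ℝ}
    (hh : h ∈ YM d M) : 0 ≤ Ffun d h := by
  obtain ⟨hh, rfl⟩ := hh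
  have hh0 : ¬ h =ᵐ[volume] 0 := fun h0 => by
    simp [nrm, eLpNorm_congr_ae h0] at hM
  have hm := one_lt_mexp hd
  have hW := Wfun_le_Cstar_mul (bddAbove_cstarRatios (by omega) (hM.trans_le hMc)) hh hh0
    (by linarith)
  have hC := cD_mul_Cstar_mul_rpow_le hd hM hMc
  have hc := cD_pos hd
  rw [Ffun, sub_nonneg, integral_rpow_eq_toReal_eLpNorm_rpow (by linarith) hh.2.1 hh.2.2]
  change _ ≤ _ * nrm d (mexp d) h ^ mexp d
  set D := nrm d (mexp d) h ^ mexp d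
  have hD : 0 ≤ D := Real.rpow_nonneg ENNReal.toReal_nonneg _
  calc cD d / 2 * Wfun d h ≤ cD d / 2 * (Cstar d * (nrm d 1 h ^ (2 / (d : ℝ)) * D)) := by gcongr
    _ = cD d / 2 * Cstar d * nrm d 1 h ^ (2 / (d : ℝ)) * D := by ring
    _ ≤ 1 / (mexp d - 1) * D := by gcongr

def ballDensity (d : ℕ) (M R : ℝ) : E d → ℝ :=
  (ball (0 : E d) R).indicator fun _ => M / volume.real (ball (0 : E d) R)

theorem ballDensity_nonneg {M R : ℝ} (hM : 0 ≤ M) : 0 ≤ ballDensity d M R :=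
  Set.indicator_nonneg fun _ _ => div_nonneg hM measureReal_nonneg

theorem ballDensity_mem_YM {M R : ℝ} (hM : 0 ≤ M) (hR : 0 < R) : ballDensity d M R ∈ YM d M := by
  have hv : 0 < volume.real (ball (0 : E d) R) := measureReal_ball_pos hR
  have hmem : ∀ p, MemLp (ballDensity d M R) p volume := fun p =>
    memLp_indicator_const p measurableSet_ball _ (Or.inr measure_ball_lt_top.ne)
  refine ⟨⟨hmem 1, hmem _, Eventually.of_forall (ballDensity_nonneg hM)⟩, ?_⟩
  rw [nrm, ENNReal.ofReal_one, ballDensity,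
    eLpNorm_indicator_const measurableSet_ball one_ne_zero ENNReal.one_ne_top]
  simp only [ENNReal.toReal_one, div_one, ENNReal.rpow_one, ENNReal.toReal_mul]
  rw [toReal_enorm, Real.norm_of_nonneg (by positivity), ← measureReal_def,
    div_mul_cancel₀ M hv.ne']

theorem Ffun_ballDensity_le (hd : 3 ≤ d) {M R : ℝ} (hM : 0 ≤ M) (hR : 0 < R) :
    Ffun d (ballDensity d M R) ≤
      M ^ mexp d * volume.real (ball (0 : E d) R) ^ (-(mexp d - 1)) / (mexp d - 1) := by
  set v := volume.real (ball (0 : E d) R)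
  have hv : 0 < v := measureReal_ball_pos hR
  have hm := one_lt_mexp hd
  have hpow : (fun x => ballDensity d M R x ^ mexp d) =
      (ball (0 : E d) R).indicator fun _ => (M / v) ^ mexp d := by
    ext x
    by_cases hx : x ∈ ball (0 : E d) R
    · simp [ballDensity, hx, v]
    · simp [ballDensity, hx, Real.zero_rpow (by linarith : mexp d ≠ 0)]
  have hint : ∫ x, ballDensity d M R x ^ mexp d = M ^ mexp d * v ^ (-(mexp d - 1)) := by
    rw [hpow, integral_indicator_const _ measurableSet_ball, smul_eq_mul, Real.div_rpow hM hv.le,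
      neg_sub, Real.rpow_sub hv, Real.rpow_one]
    ring
  have hW : 0 ≤ cD d / 2 * Wfun d (ballDensity d M R) :=
    mul_nonneg (div_nonneg (cD_pos hd).le two_pos.le) (Wfun_nonneg (ballDensity_nonneg hM))
  rw [Ffun, hint, one_div_mul_eq_div]
  linarith

end

/-- For `0 < M ≤ M_c` the infimum of the free energy over `𝒴_M` equals zero. -/
theorem freeEnergy_inf_eq_zero (d : ℕ) (hd : 3 ≤ d) (M : ℝ) (hM : 0 < M)
    (hMc : M ≤ Mc d) :
    IsGLB (Ffun d '' YM d M) 0 := by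
  refine ⟨?_, fun b hb => ?_⟩
  · rintro _ ⟨h, hh, rfl⟩
    exact Ffun_nonneg hd hM hMc hh
  · have hbound : Tendsto (fun R => M ^ mexp d *
        volume.real (ball (0 : E d) R) ^ (-(mexp d - 1)) / (mexp d - 1)) atTop (𝓝 0) := by
      simpa using (((tendsto_rpow_neg_atTop (sub_pos.mpr (one_lt_mexp hd))).comp
        (tendsto_measureReal_ball_atTop (by omega))).const_mul _).div_const _
    refine ge_of_tendsto hbound ?_
    filter_upwards [eventually_gt_atTop 0] with R hR
    exact (hb ⟨_, ballDensity_mem_YM hM.le hR, rfl⟩).trans (Ffun_ballDensity_le hd hM.le hR)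
end
end

section
/- There is no constant K > 0 such that the reverse Hölder-type inequality ‖h‖_m^m ‖h‖₁^(2/d) ≤ K ‖h‖_{2d/(d+2)}² holds for all measurable h : ℝ^d → ℝ with h ≥ 0 a.e. and h ∈ L¹(ℝ^d) ∩ L^m(ℝ^d). (Indeed, for γ ∈ ((d+2)/d, d/m) the family b_δ(x) = (δ+|x|)^(−γ) 𝟙_{B(0,1)}(x), δ ∈ (0,1], is bounded in L¹ and in L^{2d/(d+2)} but unbounded in L^m.) -/
open MeasureTheory Real Metric Set

noncomputable section

/-! The counterexample is a two-step function on the unit ball `B`: height `1` on `B` minus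
the ball `B_r`, and height `r ^ (-(d + 2) / 2)` on `B_r`. Its `L^p` mass to the power `p` is
`(1 - r^d + r^(d - p (d + 2) / 2)) |B|`. For `p = 2d/(d + 2)` the spike contributes exactly `|B|`,
and `‖h‖₁ ≥ |B| / 2`, so the right-hand side stays bounded, while for `p = m > 2d/(d + 2)` the spike
contributes `r ^ (-(d - 2)/d) |B|`, which blows up as `r → 0` because `d ≥ 3`. -/

open Filter Topology

section TwoStep

variable {α : Type*} {S T : Set α} {a b p : ℝ}

lemma enorm_indicator_add_indicator_rpow (hST : Disjoint S T) (ha : 0 ≤ a) (hb : 0 ≤ b)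
    (hp : 0 < p) (x : α) :
    ‖(S.indicator (fun _ => a) + T.indicator (fun _ => b)) x‖ₑ ^ p =
      S.indicator (fun _ => ENNReal.ofReal (a ^ p)) x +
        T.indicator (fun _ => ENNReal.ofReal (b ^ p)) x := by
  by_cases hxS : x ∈ S
  · have hxT : x ∉ T := disjoint_left.mp hST hxS
    simp [hxS, hxT, Real.enorm_of_nonneg ha, ENNReal.ofReal_rpow_of_nonneg ha hp.le]
  · by_cases hxT : x ∈ T
    · simp [hxS, hxT, Real.enorm_of_nonneg hb, ENNReal.ofReal_rpow_of_nonneg hb hp.le]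
    · simp [hxS, hxT, ENNReal.zero_rpow_of_pos hp]

lemma eLpNorm_indicator_add_indicator_toReal [MeasurableSpace α] {μ : Measure α}
    (hS : MeasurableSet S) (hT : MeasurableSet T) (hST : Disjoint S T) (hSf : μ S ≠ ⊤) (hTf : μ T ≠ ⊤) (ha : 0 ≤ a) (hb : 0 ≤ b)
    (hp : 0 < p) :
    (eLpNorm (S.indicator (fun _ => a) + T.indicator (fun _ => b)) (ENNReal.ofReal p) μ).toReal =
      (a ^ p * μ.real S + b ^ p * μ.real T) ^ (1 / p) := by
  rw [eLpNorm_eq_lintegral_rpow_enorm_toReal (by simpa using hp) ENNReal.ofReal_ne_top,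
    ENNReal.toReal_ofReal hp.le,
    lintegral_congr (enorm_indicator_add_indicator_rpow hST ha hb hp),
    lintegral_add_left (measurable_const.indicator hS), lintegral_indicator_const hS,
    lintegral_indicator_const hT, ← ENNReal.toReal_rpow,
    ENNReal.toReal_add (by finiteness) (by finiteness), ENNReal.toReal_mul, ENNReal.toReal_mul,
    ENNReal.toReal_ofReal (by positivity), ENNReal.toReal_ofReal (by positivity)]
  rfl

end TwoStep

lemma nrm_nonneg (d : ℕ) (p : ℝ) (h : E d → ℝ) : 0 ≤ nrm d p h := ENNReal.toReal_nonneg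

lemma volume_real_ball_zero_eq_pow_mul {d : ℕ} [NeZero d] {r : ℝ} (hr : 0 ≤ r) :
    volume.real (ball (0 : E d) r) = r ^ d * volume.real (ball (0 : E d) 1) := by
  rw [Measure.real, Measure.addHaar_ball _ _ hr, finrank_euclideanSpace_fin, ENNReal.toReal_mul,
    ENNReal.toReal_ofReal (by positivity)]
  rfl

def stepBump (d : ℕ) (r : ℝ) : E d → ℝ :=
  (ball (0 : E d) 1 \ ball 0 r).indicator (fun _ => 1) +
    (ball 0 r).indicator (fun _ => r ^ (-((d : ℝ) + 2) / 2))

lemma inL1Lm_stepBump (d : ℕ) {r : ℝ} (hr : 0 < r) : InL1Lm d (stepBump d r) := by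
  have hmemLp : ∀ p, MemLp (stepBump d r) p volume := fun p => by
    rw [stepBump]
    exact (memLp_indicator_const p (measurableSet_ball.diff measurableSet_ball) (1 : ℝ)
      (Or.inr ((measure_mono sdiff_subset).trans_lt measure_ball_lt_top).ne)).add
      (memLp_indicator_const p measurableSet_ball _ (Or.inr measure_ball_lt_top.ne))
  refine ⟨hmemLp 1, hmemLp _, Eventually.of_forall fun x => ?_⟩
  exact add_nonneg (indicator_nonneg (fun _ _ => zero_le_one) x)
    (indicator_nonneg (fun _ _ => by positivity) x)

lemma nrm_rpow_stepBump {d : ℕ} [NeZero d] {r p : ℝ} (hr0 : 0 < r) (hr1 : r ≤ 1)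
    (hp : 0 < p) :
    nrm d p (stepBump d r) ^ p =
      (1 - r ^ d + r ^ ((d : ℝ) - p * ((d : ℝ) + 2) / 2)) * volume.real (ball (0 : E d) 1) := by
  have hsub : ball (0 : E d) r ⊆ ball 0 1 := ball_subset_ball hr1
  rw [nrm, stepBump,
    eLpNorm_indicator_add_indicator_toReal (measurableSet_ball.diff measurableSet_ball)
      measurableSet_ball disjoint_sdiff_left
      ((measure_mono sdiff_subset).trans_lt measure_ball_lt_top).ne measure_ball_lt_top.ne
      zero_le_one (by positivity) hp,
    one_div, Real.rpow_inv_rpow (by positivity) hp.ne', measureReal_sdiff hsub measurableSet_ball,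
    volume_real_ball_zero_eq_pow_mul hr0.le, Real.one_rpow, ← Real.rpow_mul hr0.le,
    ← Real.rpow_natCast]
  have hspike : r ^ (-((d : ℝ) + 2) / 2 * p) * r ^ (d : ℝ) =
      r ^ ((d : ℝ) - p * ((d : ℝ) + 2) / 2) := by
    rw [← Real.rpow_add hr0]
    ring_nf
  rw [← hspike]
  ring

section Estimates

variable {d : ℕ} [NeZero d] {r : ℝ}

lemma half_volume_ball_le_nrm_one_stepBump (hr0 : 0 < r) (hr : r ≤ 1 / 2) :
    volume.real (ball (0 : E d) 1) / 2 ≤ nrm d 1 (stepBump d r) := by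
  have hrd : r ^ d ≤ 1 / 2 := (pow_le_of_le_one hr0.le (by linarith) (NeZero.ne d)).trans hr
  have h := nrm_rpow_stepBump (d := d) hr0 (by linarith) one_pos
  rw [Real.rpow_one] at h
  rw [h]
  have : 0 ≤ r ^ ((d : ℝ) - 1 * ((d : ℝ) + 2) / 2) := by positivity
  have : 0 ≤ volume.real (ball (0 : E d) 1) := measureReal_nonneg
  nlinarith

lemma nrm_sq_stepBump_le (hr0 : 0 < r) (hr1 : r ≤ 1) :
    nrm d (2 * d / ((d : ℝ) + 2)) (stepBump d r) ^ 2 ≤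
      (2 * volume.real (ball (0 : E d) 1)) ^ (((d : ℝ) + 2) / d) := by
  set q : ℝ := 2 * d / ((d : ℝ) + 2)
  have hd : (0 : ℝ) < d := by exact_mod_cast Nat.pos_of_neZero d
  have hq : 0 < q := div_pos (by linarith) (by linarith)
  -- the spike height `r ^ (-(d + 2) / 2)` makes the `L^q` mass of the spike independent of `r`
  have hmass : nrm d q (stepBump d r) ^ q = (2 - r ^ d) * volume.real (ball (0 : E d) 1) := by
    rw [nrm_rpow_stepBump hr0 hr1 hq]
    have : (d : ℝ) - q * ((d : ℝ) + 2) / 2 = 0 := by simp only [q]; field_simp; ring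
    rw [this, Real.rpow_zero]
    ring
  have hsq :
      nrm d q (stepBump d r) ^ 2 = (nrm d q (stepBump d r) ^ q) ^ (((d : ℝ) + 2) / d) := by
    rw [← Real.rpow_mul (nrm_nonneg d q _), ← Real.rpow_natCast]
    congr 1
    simp only [q]
    field_simp
    norm_num
  rw [hsq, hmass]
  gcongr
  · exact mul_nonneg (by linarith [pow_le_one₀ hr0.le hr1 (n := d)]) measureReal_nonneg
  · linarith [pow_pos hr0 d]

end Estimates

lemma rpow_mul_volume_ball_le_nrm_mexp_stepBump {d : ℕ} (hd : 2 ≤ d) {r : ℝ} (hr0 : 0 < r)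
    (hr1 : r ≤ 1) :
    r ^ (-(((d : ℝ) - 2) / d)) * volume.real (ball (0 : E d) 1) ≤
      nrm d (mexp d) (stepBump d r) ^ mexp d := by
  have : NeZero d := ⟨by omega⟩
  have hd' : (2 : ℝ) ≤ d := by exact_mod_cast hd
  have hm : 0 < mexp d := div_pos (by linarith) (by linarith)
  rw [nrm_rpow_stepBump hr0 hr1 hm]
  have : (d : ℝ) - mexp d * ((d : ℝ) + 2) / 2 = -(((d : ℝ) - 2) / d) := by
    rw [mexp]; field_simp; ring
  rw [this]
  have : 0 ≤ volume.real (ball (0 : E d) 1) := measureReal_nonneg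
  have : r ^ d ≤ 1 := pow_le_one₀ hr0.le hr1
  nlinarith

/-- There is no constant `K > 0` with `‖h‖ₘ^m ‖h‖₁^(2/d) ≤ K ‖h‖_{2d/(d+2)}²` for all
nonnegative `h ∈ L¹ ∩ Lᵐ`. -/
theorem no_reverse_holder (d : ℕ) (hd : 3 ≤ d) :
    ¬ ∃ K : ℝ, 0 < K ∧ ∀ h : E d → ℝ, InL1Lm d h →
      nrm d (mexp d) h ^ mexp d * nrm d 1 h ^ (2 / (d : ℝ)) ≤
        K * nrm d (2 * d / ((d : ℝ) + 2)) h ^ 2 := by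
  rintro ⟨K, hK, hineq⟩
  have : NeZero d := ⟨by omega⟩
  have hd3 : (3 : ℝ) ≤ d := by exact_mod_cast hd
  set V := volume.real (ball (0 : E d) 1)
  have hV : 0 < V := ENNReal.toReal_pos (measure_ball_pos _ _ one_pos).ne' measure_ball_lt_top.ne
  have hbound : ∀ r ∈ Ioc (0 : ℝ) (1 / 2),
      r ^ (-(((d : ℝ) - 2) / d)) * V * (V / 2) ^ (2 / (d : ℝ)) ≤
        K * (2 * V) ^ (((d : ℝ) + 2) / d) := by
    rintro r ⟨hr0, hr⟩
    have hm := rpow_mul_volume_ball_le_nrm_mexp_stepBump (d := d) (by omega) hr0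
      (by linarith : r ≤ 1)
    have h1 := half_volume_ball_le_nrm_one_stepBump (d := d) hr0 hr
    have hq := nrm_sq_stepBump_le (d := d) hr0 (by linarith)
    calc r ^ (-(((d : ℝ) - 2) / d)) * V * (V / 2) ^ (2 / (d : ℝ))
        ≤ nrm d (mexp d) (stepBump d r) ^ mexp d * nrm d 1 (stepBump d r) ^ (2 / (d : ℝ)) :=
          mul_le_mul hm (Real.rpow_le_rpow (by positivity) h1 (by positivity)) (by positivity)
            (Real.rpow_nonneg (nrm_nonneg _ _ _) _)
      _ ≤ K * nrm d (2 * d / ((d : ℝ) + 2)) (stepBump d r) ^ 2 :=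
          hineq _ (inL1Lm_stepBump d hr0)
      _ ≤ K * (2 * V) ^ (((d : ℝ) + 2) / d) := by gcongr
  have hblowup :
      Tendsto (fun r : ℝ => r ^ (-(((d : ℝ) - 2) / d)) * V * (V / 2) ^ (2 / (d : ℝ)))
        (𝓝[>] 0) atTop := by
    have hβ : 0 < ((d : ℝ) - 2) / d := div_pos (by linarith) (by positivity)
    exact ((tendsto_rpow_neg_nhdsGT_zero (neg_neg_of_pos hβ)).atTop_mul_const hV).atTop_mul_const
      (by positivity)
  obtain ⟨r, hr_large, hr⟩ :=
    ((hblowup.eventually_gt_atTop _).and (Ioc_mem_nhdsGT (by norm_num : (0 : ℝ) < 1 / 2))).exists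
  exact (hr_large.trans_le (hbound r hr)).false
end
end
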